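/- Let K be a compact scattered topological space, with compact open sets V_t (t ∈ K) fixed so that V_t ∩ K^(α(t)) = {t}. For every nonempty closed subset H of K there exists an admissible finite set A ⊆ K with A ⊆ H ⊆ V_A. -/

import Mathlib

universe u

open Set

/-- Iterated derived sets: `K^(0) = K` and `K^(γ) = ⋂_{α<γ} (K^(α))'` for `γ > 0`. -/
noncomputable def iterDerived (K : Type u) [TopologicalSpace K] : Ordinal.{u} → Set K :=
  fun γ =>
    if γ = 0 then Set.univ
    else ⋂ α : {α : Ordinal.{u} // α < γ}, derivedSet (iterDerived K α.1)
termination_by γ => γ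
decreasing_by exact α.2

/-- A topological space is scattered if every nonempty closed subset has an isolated point. -/
def IsScattered (K : Type u) [TopologicalSpace K] : Prop :=
  ∀ C : Set K, IsClosed C → C.Nonempty → ∃ x ∈ C, x ∉ derivedSet C

/-- A finite set `A` is admissible (w.r.t. the family `V`) if `s ∉ V t` whenever
`s` and `t` are distinct elements of `A`. -/
def Admissible {K : Type u} (V : K → Set K) (A : Finset K) : Prop :=
  ∀ s ∈ A, ∀ t ∈ A, s ≠ t → s ∉ V t

/-! Induction on an ordinal `δ` with `H ∩ K^(δ) = ∅`, such as `δ = sup_t (α(t) + 1)`. At a limit `δ` compactness of `H` already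
gives some `β < δ` with `H ∩ K^(β) = ∅`. At a successor `δ = ε + 1` every point of
`D = H ∩ K^(ε)` has rank exactly `ε`, so `V_t ∩ D = {t}` for `t ∈ D`; by compactness `D` is
finite, and it is admissible. The closed set `H \ V_D` misses `K^(ε)`, so it has an admissible
cover `A'` by induction, whose points have rank `< ε`; hence `V_t` (`t ∈ A'`) contains no point
of `D`, while `A' ∩ V_D = ∅`, and `D ∪ A'` is admissible. -/

theorem IsClosed.derivedSet {X : Type*} [TopologicalSpace X] {S : Set X} (hS : IsClosed S) :
    IsClosed (derivedSet S) := by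
  refine (isClosed_iff_derivedSet_subset _).2 fun x hx => ?_
  rw [mem_derivedSet, accPt_iff_nhds] at hx ⊢
  intro U hU
  obtain ⟨y, ⟨hyU, hyS'⟩, hyx⟩ := hx U hU
  exact ⟨y, ⟨hyU, (isClosed_iff_derivedSet_subset S).1 hS hyS'⟩, hyx⟩

section IterDerived

variable {K : Type u} [TopologicalSpace K]

theorem iterDerived_zero : iterDerived K 0 = univ := by
  rw [iterDerived, if_pos rfl]

theorem iterDerived_subset_derivedSet {β γ : Ordinal.{u}} (h : β < γ) :
    iterDerived K γ ⊆ derivedSet (iterDerived K β) := by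
  rw [iterDerived, if_neg (show γ ≠ 0 from h.ne_bot)]
  exact iInter_subset_of_subset ⟨β, h⟩ subset_rfl

theorem isClosed_iterDerived (γ : Ordinal.{u}) : IsClosed (iterDerived K γ) := by
  induction γ using WellFoundedLT.induction with
  | _ γ ih =>
    rw [iterDerived]
    split
    · exact isClosed_univ
    · exact isClosed_iInter fun β => (ih β.1 β.2).derivedSet

theorem iterDerived_antitone : Antitone (iterDerived K) := by
  intro β γ h
  rcases h.eq_or_lt with rfl | h
  · exact subset_rfl
  · exact (iterDerived_subset_derivedSet h).trans
      ((isClosed_iff_derivedSet_subset _).1 (isClosed_iterDerived β))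

theorem iterDerived_eq_iInter_of_isSuccLimit {δ : Ordinal.{u}} (hδ : Order.IsSuccLimit δ) :
    iterDerived K δ = ⋂ β : Iio δ, iterDerived K β := by
  refine (subset_iInter fun β => iterDerived_antitone β.2.le).antisymm fun x hx => ?_
  rw [iterDerived, if_neg (show δ ≠ 0 from hδ.ne_bot), mem_iInter]
  rintro ⟨β, hβ⟩
  exact iterDerived_subset_derivedSet (lt_add_one _)
    (mem_iInter.1 hx ⟨β + 1, hδ.add_one_lt hβ⟩)

theorem exists_inter_iterDerived_eq_empty_of_isSuccLimit [CompactSpace K] {H : Set K}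
    (hH : IsClosed H) {δ : Ordinal.{u}} (hδ : Order.IsSuccLimit δ) (h : H ∩ iterDerived K δ = ∅) :
    ∃ β < δ, H ∩ iterDerived K β = ∅ := by
  have : Nonempty (Iio δ) := ⟨⟨0, hδ.bot_lt⟩⟩
  rw [iterDerived_eq_iInter_of_isSuccLimit hδ] at h
  obtain ⟨β, hβ⟩ := hH.isCompact.elim_directed_family_closed _
    (fun β : Iio δ => isClosed_iterDerived β.1) h
    (iterDerived_antitone.comp_monotone (Subtype.mono_coe _)).directed_ge
  exact ⟨β.1, β.2, hβ⟩

end IterDerived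

section Rank

variable {K : Type u} [TopologicalSpace K] {α : K → Ordinal.{u}}

theorem mem_iterDerived_iff_le_rank
    (hα : ∀ t, t ∈ iterDerived K (α t) ∧ t ∉ iterDerived K (α t + 1)) {t : K}
    {γ : Ordinal.{u}} : t ∈ iterDerived K γ ↔ γ ≤ α t := by
  refine ⟨fun ht => ?_, fun h => iterDerived_antitone h (hα t).1⟩
  by_contra! h
  exact (hα t).2 (iterDerived_antitone (Order.add_one_le_of_lt h) ht)

theorem iterDerived_iSup_rank_add_one_eq_empty
    (hα : ∀ t, t ∈ iterDerived K (α t) ∧ t ∉ iterDerived K (α t + 1)) :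
    iterDerived K (⨆ t, α t + 1) = ∅ :=
  eq_empty_of_forall_notMem fun x hx =>
    ((lt_add_one _).trans_le (Ordinal.le_iSup _ x)).not_ge
      ((mem_iterDerived_iff_le_rank hα).1 hx)

theorem rank_le_of_inter_iterDerived_add_one_eq_empty
    (hα : ∀ t, t ∈ iterDerived K (α t) ∧ t ∉ iterDerived K (α t + 1)) {H : Set K}
    {ε : Ordinal.{u}} (hH : H ∩ iterDerived K (ε + 1) = ∅) {t : K} (ht : t ∈ H) : α t ≤ ε := by
  by_contra! h
  exact hH.subset ⟨ht, (mem_iterDerived_iff_le_rank hα).2 (Order.add_one_le_of_lt h)⟩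

variable {V : K → Set K}

theorem eq_of_mem_of_rank_le
    (hα : ∀ t, t ∈ iterDerived K (α t) ∧ t ∉ iterDerived K (α t + 1))
    (hV : ∀ t, V t ∩ iterDerived K (α t) = {t}) {s t : K} (hs : s ∈ V t) (hst : α t ≤ α s) :
    s = t :=
  (hV t).subset ⟨hs, (mem_iterDerived_iff_le_rank hα).2 hst⟩

theorem finite_inter_iterDerived_of_inter_iterDerived_add_one_eq_empty [CompactSpace K]
    (hα : ∀ t, t ∈ iterDerived K (α t) ∧ t ∉ iterDerived K (α t + 1))
    (hVopen : ∀ t, IsOpen (V t)) (hV : ∀ t, V t ∩ iterDerived K (α t) = {t}) {H : Set K}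
    (hH : IsClosed H) {ε : Ordinal.{u}} (hHε : H ∩ iterDerived K (ε + 1) = ∅) :
    (H ∩ iterDerived K ε).Finite := by
  obtain ⟨F, hFD, hFfin, hFcov⟩ :=
    (hH.inter (isClosed_iterDerived ε)).isCompact.elim_finite_subcover_image
      (fun t _ => hVopen t) fun s hs => mem_biUnion hs ((hV s).ge rfl).1
  refine hFfin.subset fun s hs => ?_
  obtain ⟨t, htF, hst⟩ := mem_iUnion₂.1 (hFcov hs)
  have hts : α t ≤ α s := (rank_le_of_inter_iterDerived_add_one_eq_empty hα hHε (hFD htF).1).trans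
    ((mem_iterDerived_iff_le_rank hα).1 hs.2)
  rwa [eq_of_mem_of_rank_le hα hV hst hts]

def HasAdmissibleCover (V : K → Set K) (H : Set K) : Prop :=
  ∃ A : Finset K, Admissible V A ∧ (A : Set K) ⊆ H ∧ H ⊆ ⋃ t ∈ A, V t

theorem hasAdmissibleCover_of_inter_iterDerived_add_one_eq_empty [CompactSpace K]
    (hα : ∀ t, t ∈ iterDerived K (α t) ∧ t ∉ iterDerived K (α t + 1))
    (hVopen : ∀ t, IsOpen (V t)) (hV : ∀ t, V t ∩ iterDerived K (α t) = {t}) {ε : Ordinal.{u}}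
    (ih : ∀ H, IsClosed H → H ∩ iterDerived K ε = ∅ → HasAdmissibleCover V H) {H : Set K}
    (hH : IsClosed H) (hHε : H ∩ iterDerived K (ε + 1) = ∅) : HasAdmissibleCover V H := by
  classical
  set A₀ := (finite_inter_iterDerived_of_inter_iterDerived_add_one_eq_empty
    hα hVopen hV hH hHε).toFinset
  have hA₀ : ∀ {s}, s ∈ A₀ ↔ s ∈ H ∩ iterDerived K ε := Finite.mem_toFinset _
  have hH'ε : (H \ ⋃ t ∈ A₀, V t) ∩ iterDerived K ε = ∅ :=
    eq_empty_of_forall_notMem fun x ⟨⟨hxH, hxV⟩, hxε⟩ =>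
      hxV (mem_biUnion (hA₀.2 ⟨hxH, hxε⟩) ((hV x).ge rfl).1)
  obtain ⟨A', hA'adm, hA'H, hHA'⟩ :=
    ih _ (hH.sdiff (isOpen_biUnion fun t _ => hVopen t)) hH'ε
  refine ⟨A₀ ∪ A', fun s hs t ht hne hst => ?_, ?_, ?_⟩
  · rcases Finset.mem_union.1 hs with hs | hs
    · have htH : t ∈ H := by
        rcases Finset.mem_union.1 ht with ht | ht
        exacts [(hA₀.1 ht).1, (hA'H ht).1]
      exact hne (eq_of_mem_of_rank_le hα hV hst
        ((rank_le_of_inter_iterDerived_add_one_eq_empty hα hHε htH).trans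
          ((mem_iterDerived_iff_le_rank hα).1 (hA₀.1 hs).2)))
    · rcases Finset.mem_union.1 ht with ht | ht
      · exact (hA'H hs).2 (mem_biUnion ht hst)
      · exact hA'adm s hs t ht hne hst
  · rw [Finset.coe_union]
    exact union_subset (fun s hs => (hA₀.1 hs).1) (hA'H.trans sdiff_subset)
  · rw [Finset.set_biUnion_union]
    exact sdiff_subset_iff.1 hHA'

theorem hasAdmissibleCover_of_inter_iterDerived_eq_empty [CompactSpace K]
    (hα : ∀ t, t ∈ iterDerived K (α t) ∧ t ∉ iterDerived K (α t + 1))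
    (hVopen : ∀ t, IsOpen (V t)) (hV : ∀ t, V t ∩ iterDerived K (α t) = {t}) (δ : Ordinal.{u})
    {H : Set K} (hH : IsClosed H) (hHδ : H ∩ iterDerived K δ = ∅) : HasAdmissibleCover V H := by
  induction δ using Ordinal.limitRecOn generalizing H with
  | zero =>
    rw [iterDerived_zero, inter_univ] at hHδ
    exact ⟨∅, fun s hs => absurd hs (Finset.notMem_empty s), by simp, by simp [hHδ]⟩
  | add_one ε ih =>
    exact hasAdmissibleCover_of_inter_iterDerived_add_one_eq_empty hα hVopen hV
      (fun _ => ih) hH hHδ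
  | limit δ hδ ih =>
    obtain ⟨β, hβ, hHβ⟩ := exists_inter_iterDerived_eq_empty_of_isSuccLimit hH hδ hHδ
    exact ih β hβ hH hHβ

end Rank

theorem stmt_1_general (K : Type u) [TopologicalSpace K] [CompactSpace K]
    (α : K → Ordinal.{u})
    (hα : ∀ t, t ∈ iterDerived K (α t) ∧ t ∉ iterDerived K (α t + 1))
    (V : K → Set K)
    (hVopen : ∀ t, IsOpen (V t))
    (hV : ∀ t, V t ∩ iterDerived K (α t) = {t})
    (H : Set K) (hHcl : IsClosed H) :
    ∃ A : Finset K, Admissible V A ∧ (A : Set K) ⊆ H ∧ H ⊆ ⋃ t ∈ A, V t :=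
  hasAdmissibleCover_of_inter_iterDerived_eq_empty hα hVopen hV _ hHcl
    (by rw [iterDerived_iSup_rank_add_one_eq_empty hα, inter_empty])

theorem stmt_1 (K : Type u) [TopologicalSpace K] [CompactSpace K]
    (hscat : IsScattered K)
    (α : K → Ordinal.{u})
    (hα : ∀ t, t ∈ iterDerived K (α t) ∧ t ∉ iterDerived K (α t + 1))
    (V : K → Set K)
    (hVcomp : ∀ t, IsCompact (V t)) (hVopen : ∀ t, IsOpen (V t))
    (hV : ∀ t, V t ∩ iterDerived K (α t) = {t})
    (H : Set K) (hHcl : IsClosed H) (hHne : H.Nonempty) :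
    ∃ A : Finset K, Admissible V A ∧ (A : Set K) ⊆ H ∧ H ⊆ ⋃ t ∈ A, V t :=
  stmt_1_general K α hα V hVopen hV H hHcl
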